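/- arXiv:1607.04777 — 2 statements merged into one kernel-verified Lean document; each statement's English description precedes it below -/
import Mathlib

section
/- Given a digraph D, let T(D) be the 3-tropical graph constructed as follows: the vertex set of T(D) contains V(D), with all these vertices coloured Blue, and for each arc (u,v) of D, two new vertices x_{u,(u,v)} coloured Red and x_{v,(u,v)} coloured Green, together with the path u — x_{u,(u,v)} — x_{v,(u,v)} — v. Then for any two digraphs D₁ and D₂, there is a digraph homomorphism of D₁ to D₂ if and only if there is a tropical graph homomorphism of T(D₁) to T(D₂). -/
/-- The three colours used in the construction T(D). -/
inductive Colour3 : Type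
  | blue | red | green
  deriving DecidableEq

/-- The arcs of a digraph D, given as a relation. -/
def Arc {V : Type*} (D : V → V → Prop) : Type _ := {p : V × V // D p.1 p.2}

/-- Vertices of T(D): the original vertices, plus two new vertices for each arc
(`false` for the Red vertex x_u attached to the tail, `true` for the Green vertex x_v
attached to the head). -/
def TVert {V : Type*} (D : V → V → Prop) : Type _ := V ⊕ (Arc D × Bool)

/-- One direction of the adjacency of T(D): for each arc (u,v), the path
u — x_{u} — x_{v} — v. -/
def TAdjHalf {V : Type*} (D : V → V → Prop) : TVert D → TVert D → Prop
  | Sum.inl u, Sum.inr eb => eb.2 = false ∧ eb.1.1.1 = u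
  | Sum.inr eb, Sum.inr eb' => eb.1 = eb'.1 ∧ eb.2 = false ∧ eb'.2 = true
  | Sum.inr eb, Sum.inl v => eb.2 = true ∧ eb.1.1.2 = v
  | Sum.inl _, Sum.inl _ => False

/-- The graph T(D), obtained from D by replacing each arc (u,v) by a path
u — x_u — x_v — v of length 3. -/
def TGraph {V : Type*} (D : V → V → Prop) : SimpleGraph (TVert D) :=
  SimpleGraph.fromRel (TAdjHalf D)

/-- The colouring of T(D): original vertices are Blue, the x_u's are Red,
the x_v's are Green. -/
def TColour {V : Type*} (D : V → V → Prop) : TVert D → Colour3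
  | Sum.inl _ => Colour3.blue
  | Sum.inr (_, false) => Colour3.red
  | Sum.inr (_, true) => Colour3.green

/-!
A digraph homomorphism `f` induces a map of `T(D₁)` to `T(D₂)` sending the subdivided arc
`(u, v)` onto the subdivided arc `(f u, f v)`. Conversely, a colour-preserving homomorphism
`g` maps Blue vertices to Blue vertices, hence restricts to a map `f` on `V₁`; it maps the path
`u — x_u — x_v — v` of an arc `(u, v)` to a Blue–Red–Green–Blue path from `f u` to `f v`, and
in `T(D₂)` such a path is necessarily a subdivided arc, so `(f u, f v)` is an arc of `D₂`.
-/

section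

variable {V V₁ V₂ : Type*} {D : V → V → Prop} {D₁ : V₁ → V₁ → Prop} {D₂ : V₂ → V₂ → Prop}

namespace TGraph

theorem adj_iff {x y : TVert D} :
    (TGraph D).Adj x y ↔ TAdjHalf D x y ∨ TAdjHalf D y x := by
  rw [TGraph, SimpleGraph.fromRel_adj, and_iff_right_iff_imp]
  rintro (h | h) rfl <;>
    rcases x with _ | ⟨_, _ | _⟩ <;> simp_all [TAdjHalf]

theorem adj_of_tAdjHalf {x y : TVert D} (h : TAdjHalf D x y) : (TGraph D).Adj x y :=
  adj_iff.2 (Or.inl h)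

@[simp]
theorem adj_inl_red_iff {u : V} {e : Arc D} :
    (TGraph D).Adj (Sum.inl u) (Sum.inr (e, false)) ↔ e.1.1 = u :=
  adj_iff.trans (by simp [TAdjHalf])

@[simp]
theorem adj_red_green_iff {e e' : Arc D} :
    (TGraph D).Adj (Sum.inr (e, false)) (Sum.inr (e', true)) ↔ e = e' :=
  adj_iff.trans (by simp [TAdjHalf])

@[simp]
theorem adj_green_inl_iff {e : Arc D} {v : V} :
    (TGraph D).Adj (Sum.inr (e, true)) (Sum.inl v) ↔ e.1.2 = v :=
  adj_iff.trans (by simp [TAdjHalf])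

end TGraph

theorem TColour_eq_blue_iff {x : TVert D} : TColour D x = .blue ↔ ∃ u, x = Sum.inl u := by
  refine ⟨fun h => ?_, by rintro ⟨u, rfl⟩; rfl⟩
  rcases x with u | ⟨e, _ | _⟩
  · exact ⟨u, rfl⟩
  · nomatch h
  · nomatch h

theorem TColour_eq_red_iff {x : TVert D} :
    TColour D x = .red ↔ ∃ e, x = Sum.inr (e, false) := by
  refine ⟨fun h => ?_, by rintro ⟨e, rfl⟩; rfl⟩
  rcases x with _ | ⟨e, _ | _⟩
  · nomatch h
  · exact ⟨e, rfl⟩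
  · nomatch h

theorem TColour_eq_green_iff {x : TVert D} :
    TColour D x = .green ↔ ∃ e, x = Sum.inr (e, true) := by
  refine ⟨fun h => ?_, by rintro ⟨e, rfl⟩; rfl⟩
  rcases x with _ | ⟨e, _ | _⟩
  · nomatch h
  · nomatch h
  · exact ⟨e, rfl⟩

theorem TGraph.rel_of_coloured_path {u v : V} {x y : TVert D} (hx : TColour D x = .red)
    (hy : TColour D y = .green) (hux : (TGraph D).Adj (Sum.inl u) x)
    (hxy : (TGraph D).Adj x y) (hyv : (TGraph D).Adj y (Sum.inl v)) : D u v := by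
  obtain ⟨e, rfl⟩ := TColour_eq_red_iff.1 hx
  obtain ⟨e', rfl⟩ := TColour_eq_green_iff.1 hy
  simp only [TGraph.adj_inl_red_iff, TGraph.adj_red_green_iff,
    TGraph.adj_green_inl_iff] at hux hxy hyv
  subst hxy
  exact hux ▸ hyv ▸ e.2

def Arc.map (f : V₁ → V₂) (hf : ∀ u v, D₁ u v → D₂ (f u) (f v)) (e : Arc D₁) : Arc D₂ :=
  ⟨(f e.1.1, f e.1.2), hf _ _ e.2⟩

def TVert.map (f : V₁ → V₂) (hf : ∀ u v, D₁ u v → D₂ (f u) (f v)) :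
    TVert D₁ → TVert D₂ :=
  Sum.map f (Prod.map (Arc.map f hf) id)

theorem TVert.tAdjHalf_map (f : V₁ → V₂) (hf : ∀ u v, D₁ u v → D₂ (f u) (f v))
    {x y : TVert D₁} (h : TAdjHalf D₁ x y) : TAdjHalf D₂ (map f hf x) (map f hf y) := by
  rcases x with u | ⟨e, b⟩ <;> rcases y with v | ⟨e', b'⟩
  · exact h.elim
  · obtain ⟨rfl, rfl⟩ := h; exact ⟨rfl, rfl⟩
  · obtain ⟨rfl, rfl⟩ := h; exact ⟨rfl, rfl⟩
  · obtain ⟨rfl, rfl, rfl⟩ := h; exact ⟨rfl, rfl, rfl⟩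

theorem TColour_map (f : V₁ → V₂) (hf : ∀ u v, D₁ u v → D₂ (f u) (f v)) (x : TVert D₁) :
    TColour D₂ (TVert.map f hf x) = TColour D₁ x := by
  rcases x with _ | ⟨_, _ | _⟩ <;> rfl

def TGraph.mapHom (f : V₁ → V₂) (hf : ∀ u v, D₁ u v → D₂ (f u) (f v)) :
    TGraph D₁ →g TGraph D₂ where
  toFun := TVert.map f hf
  map_rel' h := by
    rcases TGraph.adj_iff.1 h with h | h
    · exact TGraph.adj_of_tAdjHalf (TVert.tAdjHalf_map f hf h)
    · exact (TGraph.adj_of_tAdjHalf (TVert.tAdjHalf_map f hf h)).symm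

end

/-- For any two digraphs D₁ and D₂, D₁ → D₂ iff T(D₁) → T(D₂) tropically. -/
theorem stmt4 {V₁ V₂ : Type*} (D₁ : V₁ → V₁ → Prop) (D₂ : V₂ → V₂ → Prop) :
    (∃ f : V₁ → V₂, ∀ u v, D₁ u v → D₂ (f u) (f v)) ↔
    (∃ g : TGraph D₁ →g TGraph D₂, ∀ x, TColour D₂ (g x) = TColour D₁ x) := by
  constructor
  · rintro ⟨f, hf⟩
    exact ⟨TGraph.mapHom f hf, TColour_map f hf⟩
  · rintro ⟨g, hg⟩
    choose f hf using fun u => TColour_eq_blue_iff.1 ((hg (Sum.inl u)).trans rfl)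
    refine ⟨f, fun u v huv => ?_⟩
    let e : Arc D₁ := ⟨(u, v), huv⟩
    refine TGraph.rel_of_coloured_path (x := g (Sum.inr (e, false))) (y := g (Sum.inr (e, true)))
      (hg _) (hg _) ?_ (g.map_adj (TGraph.adj_red_green_iff.2 rfl)) ?_
    · simpa only [hf] using g.map_adj (TGraph.adj_inl_red_iff.2 (rfl : e.1.1 = u))
    · simpa only [hf] using g.map_adj (TGraph.adj_green_inl_iff.2 (rfl : e.1.2 = v))
end

section
/- Let x₀x₁⋯x₈ be a path P of length 8 whose vertices are coloured as follows: x₀ and x₈ receive colours from {Green, Blue} with c(x₀) ≠ c(x₈), x₅ is Red, and all other vertices are Yellow. Let u₀u₁⋯u₈ be another path P' coloured by the same rule (u₀,u₈ ∈ {Green,Blue} with distinct colours, u₅ Red, the rest Yellow). Then there is a tropical homomorphism of P to P' if and only if c(x₀) = c(u₀) and c(x₈) = c(u₈). -/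
/-- Four distinct colours. -/
inductive Colour4 : Type
  | green | blue | red | yellow
  deriving DecidableEq

/-- The colouring pattern of the path P_{x,y} on 9 vertices: the two endpoints get
distinct colours from {Green, Blue}, vertex 5 is Red, all other vertices are Yellow. -/
def PPathColouring (c : Fin 9 → Colour4) : Prop :=
  (c 0 = Colour4.green ∨ c 0 = Colour4.blue) ∧
  (c 8 = Colour4.green ∨ c 8 = Colour4.blue) ∧
  c 0 ≠ c 8 ∧ c 5 = Colour4.red ∧
  ∀ i : Fin 9, i ≠ 0 → i ≠ 5 → i ≠ 8 → c i = Colour4.yellow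

/-!
A homomorphism between paths is 1-Lipschitz for the path metric. A tropical one must send the
unique Red vertex 5 to 5 and the endpoint 8 to an endpoint; being within distance 3 of 5, that
endpoint is 8, so `c 8 = c' 8`. The endpoint 0 is also sent to an endpoint, and not to 8 since
`c 0 ≠ c 8`. Conversely, such a colouring is determined by its endpoint colours, so the identity
is a tropical homomorphism when they agree.
-/

namespace SimpleGraph

theorem pathGraph_hom_abs_sub_le {n m : ℕ} (f : pathGraph n →g pathGraph m) (i j : Fin n) :
    |((f i : ℕ) : ℤ) - f j| ≤ |(i : ℤ) - j| := by
  wlog hij : i ≤ j generalizing i j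
  · rw [abs_sub_comm, abs_sub_comm (i : ℤ)]
    exact this j i (le_of_not_ge hij)
  obtain ⟨k, hk⟩ := Nat.exists_eq_add_of_le hij
  rw [abs_sub_comm (i : ℤ), hk, Nat.cast_add, add_sub_cancel_left, Nat.abs_cast, abs_le]
  induction k generalizing j with
  | zero => simp [Fin.ext hk]
  | succ k ih =>
    obtain ⟨j', hj'⟩ : ∃ j' : Fin n, (j' : ℕ) = i + k := ⟨⟨i + k, by omega⟩, rfl⟩
    have hadj := pathGraph_adj.mp <|
      f.map_adj (pathGraph_adj.mpr (Or.inl (by omega : j' + 1 = j.val)))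
    have := ih j' (by rw [Fin.le_def]; omega) hj'
    push_cast at this ⊢
    omega

end SimpleGraph

namespace PPathColouring

variable {c : Fin 9 → Colour4} {j : Fin 9}

theorem eq_five_of_apply_eq_red (hc : PPathColouring c) (h : c j = .red) : j = 5 := by
  obtain ⟨h0, h8, -, -, hy⟩ := hc
  have := hy j
  grind

theorem eq_zero_or_eq_eight_of_apply_eq (hc : PPathColouring c)
    (h : c j = .green ∨ c j = .blue) : j = 0 ∨ j = 8 := by
  obtain ⟨-, -, -, h5, hy⟩ := hc
  have := hy j
  grind

theorem eq_of_endpoints_eq {c' : Fin 9 → Colour4} (hc : PPathColouring c) (hc' : PPathColouring c')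
    (h0 : c 0 = c' 0) (h8 : c 8 = c' 8) : c = c' := by
  obtain ⟨-, -, -, h5, hy⟩ := hc
  obtain ⟨-, -, -, h5', hy'⟩ := hc'
  funext j
  have := hy j
  have := hy' j
  grind

end PPathColouring

/-- P maps tropically to P' iff the endpoint colours match. -/
theorem stmt12 (c c' : Fin 9 → Colour4) (hc : PPathColouring c) (hc' : PPathColouring c') :
    (∃ f : SimpleGraph.pathGraph 9 →g SimpleGraph.pathGraph 9, ∀ v, c' (f v) = c v) ↔
    (c 0 = c' 0 ∧ c 8 = c' 8) := by
  refine ⟨?_, fun ⟨h0, h8⟩ => ⟨.id, congrFun (hc'.eq_of_endpoints_eq hc h0.symm h8.symm)⟩⟩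
  rintro ⟨f, hf⟩
  obtain ⟨hc0, hc8, hc08, hc5, -⟩ := hc
  have hf5 : f 5 = 5 := hc'.eq_five_of_apply_eq_red (by rw [hf, hc5])
  have hf8 : f 8 = 8 := by
    refine (hc'.eq_zero_or_eq_eight_of_apply_eq (by rwa [hf])).resolve_left fun h => ?_
    have := SimpleGraph.pathGraph_hom_abs_sub_le f 8 5
    rw [h, hf5] at this
    norm_num at this
  have h8 : c 8 = c' 8 := by rw [← hf, hf8]
  have hf0 : f 0 = 0 := by
    refine (hc'.eq_zero_or_eq_eight_of_apply_eq (by rwa [hf])).resolve_right fun h => ?_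
    exact hc08 (by rw [← hf 0, h, h8])
  exact ⟨by rw [← hf, hf0], h8⟩
end
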